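/- arXiv:1911.09081 — 2 statements merged into one kernel-verified Lean document; each statement's English description precedes it below -/
import Mathlib

section
/- Let n and r be natural numbers with r ≤ n, and let P be an n × n unitary matrix over the complex numbers, written in block form P = [[P₁₁, P₁₂], [P₂₁, P₂₂]] where P₁₁ is an r × r block and P₂₂ is an (n−r) × (n−r) block. Then |det(P₁₁)|² = |det(P₂₂)|². -/
/-!
Since `P Pᴴ = 1`, multiplying `P = [[P₁₁, P₁₂], [P₂₁, P₂₂]]` on the right by
`[[P₁₁ᴴ, 0], [P₁₂ᴴ, 1]]` gives the block triangular matrix `[[1, P₁₂], [0, P₂₂]]`. Taking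
determinants, `det P · conj (det P₁₁) = det P₂₂`, and `|det P| = 1` because `P` is unitary.
-/

open Matrix

namespace Matrix

variable {m n R : Type*} [Fintype m] [Fintype n] [DecidableEq m] [DecidableEq n]
  [CommRing R] [StarRing R]

theorem det_mul_star_det_eq_det_of_fromBlocks_mul_conjTranspose_eq_one
    {A : Matrix m m R} {B : Matrix m n R} {C : Matrix n m R} {D : Matrix n n R}
    (hP : fromBlocks A B C D * (fromBlocks A B C D)ᴴ = 1) :
    (fromBlocks A B C D).det * star A.det = D.det := by
  rw [fromBlocks_conjTranspose, fromBlocks_multiply, ← fromBlocks_one] at hP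
  obtain ⟨hA, -, hC, -⟩ := fromBlocks_inj.mp hP
  have hclear : fromBlocks A B C D * fromBlocks Aᴴ 0 Bᴴ 1 = fromBlocks 1 B 0 D := by
    rw [fromBlocks_multiply, hA, hC]
    simp
  simpa [det_fromBlocks_zero₁₂, det_fromBlocks_zero₂₁, det_conjTranspose]
    using congrArg det hclear

end Matrix

theorem abs_det_block11_eq_abs_det_block22_general
    (n r : ℕ)
    (P₁₁ : Matrix (Fin r) (Fin r) ℂ)
    (P₁₂ : Matrix (Fin r) (Fin (n - r)) ℂ)
    (P₂₁ : Matrix (Fin (n - r)) (Fin r) ℂ)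
    (P₂₂ : Matrix (Fin (n - r)) (Fin (n - r)) ℂ)
    (hP : fromBlocks P₁₁ P₁₂ P₂₁ P₂₂ ∈ Matrix.unitaryGroup (Fin r ⊕ Fin (n - r)) ℂ) :
    ‖P₁₁.det‖ ^ 2 = ‖P₂₂.det‖ ^ 2 := by
  have hunit : fromBlocks P₁₁ P₁₂ P₂₁ P₂₂ * (fromBlocks P₁₁ P₁₂ P₂₁ P₂₂)ᴴ = 1 :=
    mem_unitaryGroup_iff.mp hP
  have hdet := det_mul_star_det_eq_det_of_fromBlocks_mul_conjTranspose_eq_one hunit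
  have hnorm : ‖(fromBlocks P₁₁ P₁₂ P₂₁ P₂₂).det‖ = 1 :=
    CStarRing.norm_of_mem_unitary (det_of_mem_unitary hP)
  rw [← hdet, norm_mul, norm_star, hnorm, one_mul]

/-- If an `n × n` complex unitary matrix `P` is written in block form
`P = [[P₁₁, P₁₂], [P₂₁, P₂₂]]` with `P₁₁` of size `r × r` and `P₂₂` of size
`(n-r) × (n-r)`, then `|det P₁₁|² = |det P₂₂|²`. -/
theorem abs_det_block11_eq_abs_det_block22
    (n r : ℕ) (hr : r ≤ n)
    (P₁₁ : Matrix (Fin r) (Fin r) ℂ)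
    (P₁₂ : Matrix (Fin r) (Fin (n - r)) ℂ)
    (P₂₁ : Matrix (Fin (n - r)) (Fin r) ℂ)
    (P₂₂ : Matrix (Fin (n - r)) (Fin (n - r)) ℂ)
    (hP : fromBlocks P₁₁ P₁₂ P₂₁ P₂₂ ∈ Matrix.unitaryGroup (Fin r ⊕ Fin (n - r)) ℂ) :
    ‖P₁₁.det‖ ^ 2 = ‖P₂₂.det‖ ^ 2 :=
  abs_det_block11_eq_abs_det_block22_general n r P₁₁ P₁₂ P₂₁ P₂₂ hP
end

section
/- Let A be an n × n Hermitian complex matrix whose distinct eigenvalues are λ₁, …, λ_d, and suppose that λᵢ has algebraic multiplicity 1, with unit eigenvector v. For an index k ∈ {1,…,n}, let M_k denote the (n−1) × (n−1) Hermitian submatrix of A obtained by deleting row k and column k of A, with eigenvalues λ₁(M_k), …, λ_{n−1}(M_k) counted with multiplicity. Then, denoting by μⱼ the algebraic multiplicity of λⱼ in A, we have |v(k)|² · ∏_{j ≠ i} (λᵢ − λⱼ)^{μⱼ} = ∏_{j=1}^{n−1} (λᵢ − λⱼ(M_k)), where v(k) is the k-th coordinate of v. -/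
/-!
Diagonalise `A = U D U*` with `U` unitary and `D = diag(d)`. Then
`adj (λ - A) = U diag (∏_{t ≠ l} (λ - d t)) U*`, and at the simple eigenvalue `λ = d l₀` only
the `l₀`-th diagonal entry survives; it is the value at `λ` of `charpoly A / (X - λ)`, i.e.
`∏_{j ≠ i} (λ - λⱼ)^{μⱼ}`. Since `v` is a unit multiple of the `l₀`-th column of `U`, the
`(k, k)` entry of `adj (λ - A)` is this product times `|v k|²`. On the other hand that entry is the
principal minor `det (λ - M_k) = ∏ⱼ (λ - νⱼ)`.
-/

open Finset Matrix Polynomial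

theorem Polynomial.exists_unique_root_and_eval_eq_prod_erase {R ι : Type*} [CommRing R]
    [IsDomain R] [Fintype ι] [DecidableEq ι] {d : ι → R} {a : R} {q : R[X]}
    (h : ∏ l, (X - C (d l)) = (X - C a) * q) (hq : q.eval a ≠ 0) :
    ∃ l₀, (∀ l, d l = a ↔ l = l₀) ∧ q.eval a = ∏ t ∈ univ.erase l₀, (a - d t) := by
  obtain ⟨l₀, -, hl₀⟩ : ∃ l₀ ∈ univ, a - d l₀ = 0 := by
    simpa [eval_prod, prod_eq_zero_iff] using congrArg (eval a) h
  rw [sub_eq_zero] at hl₀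
  have hcofactor : ∏ t ∈ univ.erase l₀, (X - C (d t)) = q := by
    apply mul_left_cancel₀ (X_sub_C_ne_zero a)
    rw [← h, ← mul_prod_erase _ _ (mem_univ l₀), hl₀]
  have hval : q.eval a = ∏ t ∈ univ.erase l₀, (a - d t) := by
    simp [← hcofactor, eval_prod]
  refine ⟨l₀, fun l => ⟨fun hl => ?_, fun hl => hl ▸ hl₀.symm⟩, hval⟩
  by_contra hne
  exact hq (hval ▸ prod_eq_zero (mem_erase.2 ⟨hne, mem_univ l⟩) (sub_eq_zero.2 hl.symm))

namespace Matrix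

section Unitary

variable {n α : Type*} [Fintype n] [DecidableEq n] [CommRing α] [StarRing α]
  {U : Matrix n n α} (hU : U ∈ unitaryGroup n α)
include hU

theorem adjugate_of_mem_unitaryGroup : adjugate U = det U • star U := by
  calc adjugate U = star U * U * adjugate U := by rw [mem_unitaryGroup_iff'.1 hU, one_mul]
    _ = det U • star U := by rw [mul_assoc, mul_adjugate, Matrix.mul_smul, mul_one]

theorem adjugate_mul_mul_star_of_mem_unitaryGroup (M : Matrix n n α) :
    adjugate (U * M * star U) = U * adjugate M * star U := by
  have hdet : det (star U) * det U = 1 := by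
    rw [← det_mul, mem_unitaryGroup_iff'.1 hU, det_one]
  rw [adjugate_mul_distrib, adjugate_mul_distrib, adjugate_of_mem_unitaryGroup hU,
    adjugate_of_mem_unitaryGroup (Unitary.star_mem hU), star_star, Matrix.smul_mul,
    Matrix.mul_smul, Matrix.mul_smul, smul_smul, hdet, one_smul, mul_assoc]

theorem apply_mul_star_apply_of_star_mulVec_eq_zero {v : n → α} {l₀ : n}
    (hv : ∀ l ≠ l₀, (star U *ᵥ v) l = 0) (k : n) :
    v k * star (v k) = U k l₀ * star (U k l₀) * (star v ⬝ᵥ v) := by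
  set u := star U *ᵥ v
  have hvu : v = U *ᵥ u := by rw [mulVec_mulVec, mem_unitaryGroup_iff.1 hU, one_mulVec]
  have hvk : v k = U k l₀ * u l₀ := by
    rw [hvu]
    exact sum_eq_single l₀ (fun l _ hl => by rw [hv l hl, mul_zero]) (by simp)
  have hnorm : star v ⬝ᵥ v = star (u l₀) * u l₀ := by
    rw [hvu, star_mulVec, ← dotProduct_mulVec, mulVec_mulVec, ← star_eq_conjTranspose,
      mem_unitaryGroup_iff'.1 hU, one_mulVec]
    exact sum_eq_single l₀ (fun l _ hl => by simp [hv l hl]) (by simp)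
  rw [hnorm, hvk, star_mul']
  ring

end Unitary

theorem mul_diagonal_mul_apply {n m α : Type*} [Fintype m] [DecidableEq m] [CommRing α]
    (M : Matrix n m α) (f : m → α) (N : Matrix m n α) (i j : n) :
    (M * diagonal f * N) i j = ∑ l, M i l * f l * N l j := by
  rw [mul_apply]
  simp only [mul_diagonal]

theorem adjugate_apply_self_eq_det_submatrix_compl {α : Type*} [CommRing α] {n : ℕ}
    (B : Matrix (Fin n) (Fin n) α) (k : Fin n) :
    adjugate B k k = det (B.submatrix (fun p : {x // x ∈ ({k}ᶜ : Finset (Fin n))} => (p : Fin n))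
      (fun p : {x // x ∈ ({k}ᶜ : Finset (Fin n))} => (p : Fin n))) := by
  obtain ⟨m, rfl⟩ := Nat.exists_eq_succ_of_ne_zero k.pos.ne'
  let e : Fin m ≃ {x // x ∈ ({k}ᶜ : Finset (Fin (m + 1)))} :=
    (finSuccAboveEquiv k).trans (Equiv.subtypeEquivRight fun x => by simp)
  rw [← det_submatrix_equiv_self e, adjugate_fin_succ_eq_det_submatrix, ← two_mul, pow_mul,
    neg_one_sq, one_pow, one_mul]
  rfl

theorem adjugate_scalar_sub_apply_self {R : Type*} [CommRing R] {n : ℕ}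
    (A : Matrix (Fin n) (Fin n) R) (k : Fin n) (t : R) :
    adjugate (scalar (Fin n) t - A) k k =
      (A.submatrix (fun p : {x // x ∈ ({k}ᶜ : Finset (Fin n))} => (p : Fin n))
        (fun p : {x // x ∈ ({k}ᶜ : Finset (Fin n))} => (p : Fin n))).charpoly.eval t := by
  rw [adjugate_apply_self_eq_det_submatrix_compl, eval_charpoly]
  congr 1
  ext p q
  simp only [submatrix_apply, sub_apply, scalar_apply, diagonal_apply, Subtype.ext_iff]

end Matrix

namespace Matrix.IsHermitian

variable {𝕜 n : Type*} [RCLike 𝕜] [Fintype n] [DecidableEq n] {A : Matrix n n 𝕜}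
  (hA : A.IsHermitian)
include hA

theorem scalar_sub_eq (x : 𝕜) :
    scalar n x - A = (hA.eigenvectorUnitary : Matrix n n 𝕜) *
      diagonal (fun l => x - hA.eigenvalues l) * star (hA.eigenvectorUnitary : Matrix n n 𝕜) := by
  have hD : diagonal (fun l => x - (hA.eigenvalues l : 𝕜))
      = algebraMap 𝕜 _ x - diagonal (RCLike.ofReal ∘ hA.eigenvalues) := by
    rw [algebraMap_eq_diagonal, ← diagonal_sub]
    rfl
  rw [← Unitary.conjStarAlgAut_apply (S := 𝕜), hD, map_sub, AlgHomClass.commutes,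
    ← hA.spectral_theorem]
  rfl

theorem adjugate_scalar_sub_eq (x : 𝕜) :
    (scalar n x - A).adjugate = (hA.eigenvectorUnitary : Matrix n n 𝕜) *
      diagonal (fun l => ∏ t ∈ univ.erase l, (x - hA.eigenvalues t)) *
      star (hA.eigenvectorUnitary : Matrix n n 𝕜) := by
  rw [hA.scalar_sub_eq, adjugate_mul_mul_star_of_mem_unitaryGroup hA.eigenvectorUnitary.2,
    adjugate_diagonal]

theorem star_eigenvectorUnitary_mulVec_apply_eq_zero {a : 𝕜} {v : n → 𝕜} (hv : A *ᵥ v = a • v)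
    {l : n} (hl : (hA.eigenvalues l : 𝕜) ≠ a) :
    (star (hA.eigenvectorUnitary : Matrix n n 𝕜) *ᵥ v) l = 0 := by
  set U := (hA.eigenvectorUnitary : Matrix n n 𝕜)
  have hUA : star U * A = diagonal (RCLike.ofReal ∘ hA.eigenvalues) * star U := by
    conv_lhs => rw [hA.spectral_theorem, Unitary.conjStarAlgAut_apply]
    rw [← mul_assoc, ← mul_assoc, Unitary.coe_star_mul_self, one_mul]
  have hentry := congrFun (congrArg (· *ᵥ v) hUA) l
  simp only [← mulVec_mulVec, hv, mulVec_smul, mulVec_diagonal, Pi.smul_apply, smul_eq_mul,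
    Function.comp_apply] at hentry
  exact (mul_eq_mul_right_iff.1 hentry.symm).resolve_left hl

theorem adjugate_scalar_sub_apply_self_mul_dotProduct {a : 𝕜} {l₀ : n}
    (hl₀ : ∀ l, (hA.eigenvalues l : 𝕜) = a ↔ l = l₀) {v : n → 𝕜} (hv : A *ᵥ v = a • v) (k : n) :
    (scalar n a - A).adjugate k k * (star v ⬝ᵥ v) =
      (∏ t ∈ univ.erase l₀, (a - hA.eigenvalues t)) * (v k * star (v k)) := by
  rw [hA.adjugate_scalar_sub_eq, mul_diagonal_mul_apply, sum_eq_single l₀, star_apply,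
    apply_mul_star_apply_of_star_mulVec_eq_zero hA.eigenvectorUnitary.2
      (fun l hl => hA.star_eigenvectorUnitary_mulVec_apply_eq_zero hv ((hl₀ l).not.2 hl))]
  · ring
  · intro l _ hl
    have hroot : a - hA.eigenvalues l₀ = 0 := sub_eq_zero.2 ((hl₀ l₀).2 rfl).symm
    rw [prod_eq_zero (mem_erase.2 ⟨Ne.symm hl, mem_univ l₀⟩) hroot, mul_zero, zero_mul]
  · simp

end Matrix.IsHermitian

/-- Eigenvectors from eigenvalues (Denton–Parke–Tao–Zhang).
If `lam i` is an eigenvalue of the Hermitian matrix `A` of algebraic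
multiplicity `1`, with unit eigenvector `v`, and `M_k` is the principal
submatrix of `A` obtained by deleting the `k`-th row and column, with
eigenvalues `ν` (with multiplicity), then
`|v k|² ⬝ ∏_{j ≠ i} (lam i − lam j)^{μ j} = ∏_j (lam i − ν j)`. -/
theorem abs_eigenvector_entry_sq
    (n d : ℕ) (A : Matrix (Fin n) (Fin n) ℂ)
    (hA : A.IsHermitian)
    (lam : Fin d → ℝ) (μ : Fin d → ℕ)
    (hdist : Function.Injective lam)
    (hchar : A.charpoly = ∏ j, (X - C (lam j : ℂ)) ^ μ j)
    (i : Fin d) (hμi : μ i = 1)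
    (v : Fin n → ℂ)
    (hunit : star v ⬝ᵥ v = 1)
    (heig : A.mulVec v = ((lam i : ℂ)) • v)
    (k : Fin n)
    (ν : Fin (n - 1) → ℝ)
    (hMk : (A.submatrix (fun p : {x // x ∈ ({k}ᶜ : Finset (Fin n))} => (p : Fin n))
        (fun p : {x // x ∈ ({k}ᶜ : Finset (Fin n))} => (p : Fin n))).charpoly
        = ∏ j, (X - C (ν j : ℂ))) :
    ‖v k‖ ^ 2
      * ∏ j ∈ Finset.univ.erase i, (lam i - lam j) ^ μ j
      = ∏ j, (lam i - ν j) := by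
  set q : ℂ[X] := ∏ j ∈ univ.erase i, (X - C (lam j : ℂ)) ^ μ j
  have hfactor : A.charpoly = (X - C (lam i : ℂ)) * q := by
    rw [hchar, ← mul_prod_erase _ _ (mem_univ i), hμi, pow_one]
  have hq : q.eval (lam i : ℂ) ≠ 0 := by
    simp only [q, eval_prod, eval_pow, eval_sub, eval_X, eval_C]
    exact prod_ne_zero_iff.2 fun j hj => pow_ne_zero _ <| sub_ne_zero.2 <|
      Complex.ofReal_injective.ne <| hdist.ne (ne_of_mem_erase hj).symm
  obtain ⟨l₀, hl₀, hql₀⟩ :=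
    exists_unique_root_and_eval_eq_prod_erase (hA.charpoly_eq.symm.trans hfactor) hq
  have hentry : q.eval (lam i : ℂ) * (v k * star (v k)) = ∏ j, ((lam i : ℂ) - ν j) := by
    rw [hql₀, ← hA.adjugate_scalar_sub_apply_self_mul_dotProduct hl₀ heig, hunit, mul_one,
      adjugate_scalar_sub_apply_self, hMk]
    simp [eval_prod]
  apply Complex.ofReal_injective
  push_cast
  rw [mul_comm, ← hentry]
  simp [q, eval_prod, RCLike.mul_conj]
end
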